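/- arXiv:1610.00176 — 4 statements merged into one kernel-verified Lean document; each statement's English description precedes it below -/
import Mathlib

section
/- Let m ≥ 1 and 1 ≤ c ≤ n. Then I_c^{(m)} = I_c^m + M, where M is the ideal of R generated by all monomials x_0^{a_0}x_1^{a_1}⋯x_n^{a_n} such that (1) for every subset S ⊆ {0,1,…,n} with |S| = c one has Σ_{i∈S} a_i ≥ m, and (2) the support {i : a_i > 0} has cardinality at least n − c + 3. -/
/-!
`P_S^m` is spanned by the monomials `x^a` with `∑_{i ∈ S} a_i ≥ m`, and this set of exponents is
upward closed, so `I_c^{(m)}` is the monomial ideal spanned by the `x^a` with `∑_{i ∈ S} a_i ≥ m`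
for every `c`-set `S`. For such `a` (and `m ≥ 1`) no `c`-set avoids the support, so the support
misses at most `c - 1` variables. If it misses at most `c - 2`, `x^a` is one of the extra
generators. If it misses exactly `c - 1`, adding any `i` of the support to the missed variables
gives a `c`-set, so `a_i ≥ m`; hence `x^a` is divisible by the `m`-th power of the squarefree
monomial on the support, which lies in `I_c` because the support meets every `c`-set.
-/

open MvPolynomial

/-- The ideal generated by the variables `x_i` for `i ∈ S`. -/
noncomputable def varIdeal (k : Type*) [Field k] (n : ℕ) (S : Finset (Fin (n + 1))) :
    Ideal (MvPolynomial (Fin (n + 1)) k) :=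
  Ideal.span ((fun i => (X i : MvPolynomial (Fin (n + 1)) k)) '' ↑S)

/-- The monomial star configuration ideal `I_c = ⋂_{|S| = c} P_S`. -/
noncomputable def monStar (k : Type*) [Field k] (n c : ℕ) :
    Ideal (MvPolynomial (Fin (n + 1)) k) :=
  ⨅ (S : Finset (Fin (n + 1))) (_ : S.card = c), varIdeal k n S

/-- The `m`-th symbolic power `I_c^{(m)} = ⋂_{|S| = c} (P_S)^m`. -/
noncomputable def monStarSymb (k : Type*) [Field k] (n c m : ℕ) :
    Ideal (MvPolynomial (Fin (n + 1)) k) :=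
  ⨅ (S : Finset (Fin (n + 1))) (_ : S.card = c), (varIdeal k n S) ^ m

namespace Finsupp

variable {σ : Type*}

theorem sum_add_single_one_apply {S : Finset σ} {i : σ} (hi : i ∈ S) (a : σ →₀ ℕ) :
    ∑ j ∈ S, (a + single i 1 : σ →₀ ℕ) j = ∑ j ∈ S, a j + 1 := by
  classical
  simp [Finset.sum_add_distrib, single_apply, hi]

variable [Fintype σ] [DecidableEq σ] {a : σ →₀ ℕ} {c m : ℕ}

theorem card_compl_support_lt (hm : 0 < m)
    (ha : ∀ S : Finset σ, S.card = c → m ≤ ∑ i ∈ S, a i) : a.supportᶜ.card < c := by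
  by_contra! h
  obtain ⟨S, hS, rfl⟩ := Finset.exists_subset_card_eq h
  have hzero : ∑ i ∈ S, a i = 0 := Finset.sum_eq_zero fun i hi => by simpa using hS hi
  have := ha S rfl
  omega

theorem le_apply_of_card_compl_support_add_one_eq
    (ha : ∀ S : Finset σ, S.card = c → m ≤ ∑ i ∈ S, a i) (hc : a.supportᶜ.card + 1 = c)
    {i : σ} (hi : i ∈ a.support) : m ≤ a i := by
  have hi' : i ∉ a.supportᶜ := by simpa using hi
  have := ha (insert i a.supportᶜ) (by rw [Finset.card_insert_of_notMem hi', hc])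
  rwa [Finset.sum_insert hi', Finset.sum_eq_zero fun j hj => by simpa using hj, add_zero] at this

end Finsupp

namespace MvPolynomial

variable {σ R : Type*} [CommSemiring R]

theorem mem_ideal_span_monomial_image_of_isUpperSet {s : Set (σ →₀ ℕ)} (hs : IsUpperSet s)
    {p : MvPolynomial σ R} :
    p ∈ Ideal.span ((fun a => monomial a (1 : R)) '' s) ↔ ∀ a ∈ p.support, a ∈ s := by
  rw [mem_ideal_span_monomial_image]
  exact forall₂_congr fun a _ => ⟨fun ⟨b, hb, hba⟩ => hs hba hb, fun ha => ⟨a, ha, le_rfl⟩⟩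

theorem span_X_image_pow (S : Finset σ) (m : ℕ) :
    Ideal.span ((X : σ → MvPolynomial σ R) '' S) ^ m =
      Ideal.span ((fun a => monomial a (1 : R)) '' {a | m ≤ ∑ i ∈ S, a i}) := by
  induction m with
  | zero =>
    rw [pow_zero, Ideal.one_eq_top, eq_comm, Ideal.eq_top_iff_one, one_def]
    exact Ideal.subset_span ⟨0, Nat.zero_le _, rfl⟩
  | succ m ih =>
    rw [pow_succ, ih, Ideal.span_mul_span']
    apply le_antisymm
    · rw [Ideal.span_le]
      rintro _ ⟨_, ⟨a, ha, rfl⟩, _, ⟨i, hi, rfl⟩, rfl⟩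
      refine Ideal.subset_span ⟨a + Finsupp.single i 1, ?_, by simp [X, monomial_mul]⟩
      change m + 1 ≤ _
      rw [Finsupp.sum_add_single_one_apply hi]
      exact Nat.succ_le_succ ha
    · rw [Ideal.span_le]
      rintro _ ⟨a, ha, rfl⟩
      obtain ⟨j, hjS, hj⟩ : ∃ j ∈ S, a j ≠ 0 := by
        by_contra! h
        simp [Finset.sum_eq_zero h] at ha
      have hle : Finsupp.single j 1 ≤ a := Finsupp.single_le_iff.2 (Nat.one_le_iff_ne_zero.2 hj)
      obtain ⟨b, rfl⟩ : ∃ b, a = b + Finsupp.single j 1 :=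
        ⟨a - Finsupp.single j 1, (tsub_add_cancel_of_le hle).symm⟩
      refine Ideal.subset_span ⟨monomial b 1, ⟨b, ?_, rfl⟩, X j, ⟨j, hjS, rfl⟩, ?_⟩
      · change m + 1 ≤ _ at ha
        rw [Finsupp.sum_add_single_one_apply hjS] at ha
        exact Nat.le_of_succ_le_succ ha
      · simp [X, monomial_mul]

end MvPolynomial

section StarConfiguration

variable (k : Type*) [Field k] (n : ℕ)

theorem varIdeal_pow_eq_span (S : Finset (Fin (n + 1))) (m : ℕ) :
    varIdeal k n S ^ m = Ideal.span ((fun a => monomial a (1 : k)) '' {a | m ≤ ∑ i ∈ S, a i}) :=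
  span_X_image_pow S m

theorem monStarSymb_eq_span (c m : ℕ) :
    monStarSymb k n c m = Ideal.span ((fun a => monomial a (1 : k)) ''
      {a | ∀ S : Finset (Fin (n + 1)), S.card = c → m ≤ ∑ i ∈ S, a i}) := by
  have upper (S : Finset (Fin (n + 1))) : IsUpperSet {a : Fin (n + 1) →₀ ℕ | m ≤ ∑ i ∈ S, a i} :=
    fun _ _ hab ha => ha.trans (Finset.sum_le_sum fun i _ => hab i)
  have upperAll : IsUpperSet
      {a : Fin (n + 1) →₀ ℕ | ∀ S : Finset (Fin (n + 1)), S.card = c → m ≤ ∑ i ∈ S, a i} :=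
    fun _ _ hab ha S hS => upper S hab (ha S hS)
  ext p
  simp only [monStarSymb, Submodule.mem_iInf, varIdeal_pow_eq_span,
    mem_ideal_span_monomial_image_of_isUpperSet (upper _),
    mem_ideal_span_monomial_image_of_isUpperSet upperAll, Set.mem_ofPred_eq]
  exact ⟨fun h a ha S hS => h S hS a ha, fun h S hS a ha => h a ha S hS⟩

theorem monStar_pow_le_monStarSymb (c m : ℕ) : monStar k n c ^ m ≤ monStarSymb k n c m :=
  le_iInf₂ fun S hS => Ideal.pow_right_mono (iInf₂_le S hS) m

variable {k n}

theorem prod_X_mem_monStar {c : ℕ} {T : Finset (Fin (n + 1))} (hT : Tᶜ.card < c) :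
    ∏ i ∈ T, X i ∈ monStar k n c := by
  refine Submodule.mem_iInf _ |>.2 fun S => Submodule.mem_iInf _ |>.2 fun hS => ?_
  obtain ⟨j, hjS, hjT⟩ : ∃ j ∈ S, j ∈ T := by
    by_contra! h
    have := Finset.card_le_card fun j hj => Finset.mem_compl.2 (h j hj)
    omega
  exact Ideal.mem_of_dvd _ (Finset.dvd_prod_of_mem _ hjT) (Ideal.subset_span ⟨j, hjS, rfl⟩)

theorem monomial_mem_monStar_pow {c m : ℕ} {a : Fin (n + 1) →₀ ℕ} (hc : a.supportᶜ.card < c)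
    (hm : ∀ i ∈ a.support, m ≤ a i) : monomial a (1 : k) ∈ monStar k n c ^ m := by
  refine Ideal.mem_of_dvd _ ?_ (Ideal.pow_mem_pow (prod_X_mem_monStar hc) m)
  rw [monomial_eq, C_1, one_mul, Finsupp.prod, ← Finset.prod_pow]
  exact Finset.prod_dvd_prod_of_dvd _ _ fun i hi => pow_dvd_pow _ (hm i hi)

end StarConfiguration

theorem symbolic_power_decomposition_general (k : Type*) [Field k] (n c m : ℕ)
    (hcn : c ≤ n) (hm : 1 ≤ m) :
    monStarSymb k n c m =
      monStar k n c ^ m +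
        Ideal.span {p : MvPolynomial (Fin (n + 1)) k |
          ∃ a : Fin (n + 1) →₀ ℕ, p = monomial a (1 : k) ∧
            (∀ S : Finset (Fin (n + 1)), S.card = c → m ≤ ∑ i ∈ S, a i) ∧
            n - c + 3 ≤ a.support.card} := by
  apply le_antisymm
  · rw [monStarSymb_eq_span, Ideal.span_le]
    rintro _ ⟨a, ha, rfl⟩
    have hlt := Finsupp.card_compl_support_lt hm ha
    have hcard : a.support.card + a.supportᶜ.card = n + 1 := by
      rw [Finset.card_add_card_compl, Fintype.card_fin]
    rcases show a.supportᶜ.card + 1 = c ∨ a.supportᶜ.card + 2 ≤ c by omega with hc | hc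
    · exact Submodule.mem_sup_left <| monomial_mem_monStar_pow hlt fun i hi =>
        Finsupp.le_apply_of_card_compl_support_add_one_eq ha hc hi
    · exact Submodule.mem_sup_right <| Ideal.subset_span ⟨a, rfl, ha, by omega⟩
  · refine sup_le (monStar_pow_le_monStarSymb k n c m) ?_
    rw [monStarSymb_eq_span]
    exact Ideal.span_mono fun _ ⟨a, hp, ha, _⟩ => ⟨a, ha, hp.symm⟩

theorem symbolic_power_decomposition (k : Type*) [Field k] (n c m : ℕ)
    (hn : 1 ≤ n) (hc : 1 ≤ c) (hcn : c ≤ n) (hm : 1 ≤ m) :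
    monStarSymb k n c m =
      monStar k n c ^ m +
        Ideal.span {p : MvPolynomial (Fin (n + 1)) k |
          ∃ a : Fin (n + 1) →₀ ℕ, p = monomial a (1 : k) ∧
            (∀ S : Finset (Fin (n + 1)), S.card = c → m ≤ ∑ i ∈ S, a i) ∧
            n - c + 3 ≤ a.support.card} :=
  symbolic_power_decomposition_general k n c m hcn hm
end

section
/- Let 3 ≤ c ≤ n. Then the symbolic cube of the monomial star configuration ideal decomposes as I_c^{(3)} = I_{c−2} + I_{c−1}·I_c + I_c^3. -/
/-!
All ideals involved are monomial. The monomials of `P_S ^ m` are the `x^d` with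
`∑_{i ∈ S} d_i ≥ m`, so `I_c^{(m)}` is spanned by the `x^d` all of whose `c`-subsums are at
least `m`, and `I_t = I_t^{(1)}` by the `x^d` with fewer than `t` zero exponents. Sums and
products of monomial ideals correspond to unions and sums of exponent sets, so the identity
becomes a statement about exponent vectors. One inclusion follows from
`|S| ≤ ∑_{i ∈ S} d_i + #{i | d_i = 0}`. For the other, let `z < c` be the number of zero
exponents of `d` and `U` its support: if `z ≤ c - 3` then `x^d ∈ I_{c-2}`; if `z = c - 1`, every
exponent on `U` is at least `3` and `(x_U)^3 ∣ x^d`; if `z = c - 2`, every exponent on `U` except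
a smallest one, at `j`, is at least `2` and `x_U · x_{U \ j} ∣ x^d`.
-/

open MvPolynomial

open scoped Pointwise

namespace MvPolynomial

section MonomialSpan

variable {σ R : Type*} [CommSemiring R] {A B : Set (σ →₀ ℕ)} {p : MvPolynomial σ R}

noncomputable def monomialSpan (A : Set (σ →₀ ℕ)) : Ideal (MvPolynomial σ R) :=
  Ideal.span ((monomial · 1) '' A)

theorem mem_monomialSpan : p ∈ monomialSpan A ↔ ∀ d ∈ p.support, ∃ a ∈ A, a ≤ d :=
  mem_ideal_span_monomial_image

theorem mem_monomialSpan_of_isUpperSet (hA : IsUpperSet A) :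
    p ∈ monomialSpan A ↔ ↑p.support ⊆ A := by
  refine mem_monomialSpan.trans ⟨fun h d hd => ?_, fun h d hd => ⟨d, h hd, le_rfl⟩⟩
  obtain ⟨a, ha, had⟩ := h d hd
  exact hA had ha

theorem monomialSpan_le_of_forall_exists_le (h : ∀ b ∈ B, ∃ a ∈ A, a ≤ b) :
    (monomialSpan B : Ideal (MvPolynomial σ R)) ≤ monomialSpan A :=
  fun _ hp => mem_monomialSpan.2 fun d hd =>
    let ⟨b, hb, hbd⟩ := mem_monomialSpan.1 hp d hd
    let ⟨a, ha, hab⟩ := h b hb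
    ⟨a, ha, hab.trans hbd⟩

theorem monomialSpan_mono (h : A ⊆ B) :
    (monomialSpan A : Ideal (MvPolynomial σ R)) ≤ monomialSpan B :=
  Ideal.span_mono (Set.image_mono h)

theorem monomialSpan_union (A B : Set (σ →₀ ℕ)) :
    (monomialSpan (A ∪ B) : Ideal (MvPolynomial σ R)) = monomialSpan A + monomialSpan B := by
  rw [monomialSpan, Set.image_union, Ideal.span_union, Submodule.add_eq_sup]
  rfl

theorem monomialSpan_add (A B : Set (σ →₀ ℕ)) :
    (monomialSpan (A + B) : Ideal (MvPolynomial σ R)) = monomialSpan A * monomialSpan B := by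
  simp only [monomialSpan, Ideal.span_mul_span', ← Set.image2_add, ← Set.image2_mul,
    Set.image_image2, Set.image2_image_left, Set.image2_image_right, monomial_mul, one_mul]

theorem monomialSpan_univ : (monomialSpan Set.univ : Ideal (MvPolynomial σ R)) = ⊤ :=
  (Ideal.eq_top_iff_one _).2 <|
    (mem_monomialSpan_of_isUpperSet isUpperSet_univ).2 (Set.subset_univ _)

end MonomialSpan

section PowSpanX

variable {σ R : Type*} [CommSemiring R]

theorem isUpperSet_setOf_le_sum (S : Finset σ) (m : ℕ) :
    IsUpperSet {d : σ →₀ ℕ | m ≤ ∑ i ∈ S, d i} :=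
  fun _ _ hab ha => ha.trans (Finset.sum_le_sum fun i _ => hab i)

theorem span_X_image_eq_monomialSpan (S : Finset σ) :
    Ideal.span (X '' ↑S) = (monomialSpan {d | 1 ≤ ∑ i ∈ S, d i} : Ideal (MvPolynomial σ R)) := by
  ext p
  rw [mem_ideal_span_X_image, mem_monomialSpan_of_isUpperSet (isUpperSet_setOf_le_sum S 1)]
  simp [Set.subset_def, Nat.one_le_iff_ne_zero, Finset.sum_eq_zero_iff]

theorem setOf_le_sum_add_setOf_one_le_sum (S : Finset σ) (m : ℕ) :
    {d : σ →₀ ℕ | m ≤ ∑ i ∈ S, d i} + {d | 1 ≤ ∑ i ∈ S, d i} = {d | m + 1 ≤ ∑ i ∈ S, d i} := by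
  classical
  ext d
  simp only [Set.mem_add, Set.mem_ofPred_eq]
  constructor
  · rintro ⟨a, ha, b, hb, rfl⟩
    simp only [Finsupp.add_apply, Finset.sum_add_distrib]
    omega
  · intro hd
    obtain ⟨i, hiS, hi⟩ := Finset.sum_pos_iff.1 (Nat.lt_of_succ_le (le_of_add_le_right hd))
    have hsingle : ∑ j ∈ S, (Finsupp.single i 1 : σ →₀ ℕ) j = 1 := by
      simp [Finsupp.single_apply, hiS]
    have hsplit : d - Finsupp.single i 1 + Finsupp.single i 1 = d :=
      tsub_add_cancel_of_le (Finsupp.single_le_iff.2 hi)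
    refine ⟨d - Finsupp.single i 1, ?_, Finsupp.single i 1, hsingle.ge, hsplit⟩
    have hsum := congrArg (fun e : σ →₀ ℕ => ∑ j ∈ S, e j) hsplit
    simp only [Finsupp.add_apply, Finset.sum_add_distrib, hsingle] at hsum
    omega

theorem span_X_image_pow_eq_monomialSpan (S : Finset σ) (m : ℕ) :
    Ideal.span (X '' ↑S) ^ m =
      (monomialSpan {d | m ≤ ∑ i ∈ S, d i} : Ideal (MvPolynomial σ R)) := by
  induction m with
  | zero => simp [monomialSpan_univ]
  | succ m ih =>
    rw [pow_succ, ih, span_X_image_eq_monomialSpan, ← monomialSpan_add,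
      setOf_le_sum_add_setOf_one_le_sum]

end PowSpanX

section SymbolicExponents

variable {σ : Type*}

def symbolicExponents (c m : ℕ) : Set (σ →₀ ℕ) :=
  {d | ∀ S : Finset σ, S.card = c → m ≤ ∑ i ∈ S, d i}

theorem isUpperSet_symbolicExponents (c m : ℕ) : IsUpperSet (symbolicExponents (σ := σ) c m) :=
  fun _ _ hab ha S hS => isUpperSet_setOf_le_sum S m hab (ha S hS)

theorem symbolicExponents_add_subset (c m m' : ℕ) :
    symbolicExponents (σ := σ) c m + symbolicExponents c m' ⊆ symbolicExponents c (m + m') := by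
  rintro _ ⟨a, ha, b, hb, rfl⟩ S hS
  simpa only [Finsupp.add_apply, Finset.sum_add_distrib] using add_le_add (ha S hS) (hb S hS)

variable [Fintype σ] [DecidableEq σ]

theorem card_le_sum_add_card_compl_support (S : Finset σ) (d : σ →₀ ℕ) :
    S.card ≤ ∑ i ∈ S, d i + d.supportᶜ.card := by
  calc S.card ≤ (S ∩ d.support).card + d.supportᶜ.card := by
        refine (Finset.card_le_card fun i hi => ?_).trans (Finset.card_union_le _ _)
        by_cases h : i ∈ d.support <;> simp [hi, h]
    _ ≤ ∑ i ∈ S ∩ d.support, d i + d.supportᶜ.card := by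
        gcongr
        simpa using Finset.card_nsmul_le_sum _ _ 1 fun i hi =>
          Nat.one_le_iff_ne_zero.2 (Finsupp.mem_support_iff.1 (Finset.mem_inter.1 hi).2)
    _ ≤ ∑ i ∈ S, d i + d.supportᶜ.card := by
        gcongr
        exact Finset.inter_subset_left

theorem mem_symbolicExponents_one_iff {t : ℕ} {d : σ →₀ ℕ} :
    d ∈ symbolicExponents t 1 ↔ d.supportᶜ.card < t := by
  refine ⟨fun hd => ?_, fun hd S hS => ?_⟩
  · by_contra! ht
    obtain ⟨S, hSzero, hS⟩ := Finset.exists_subset_card_eq ht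
    have := hd S hS
    rw [Finset.sum_eq_zero fun i hi => by simpa using hSzero hi] at this
    omega
  · have := card_le_sum_add_card_compl_support S d
    omega

theorem symbolicExponents_one_subset {c m t : ℕ} (h : m + t ≤ c + 1) :
    symbolicExponents (σ := σ) t 1 ⊆ symbolicExponents c m := fun d hd S hS => by
  have := card_le_sum_add_card_compl_support S d
  have := mem_symbolicExponents_one_iff.1 hd
  omega

theorem union_subset_symbolicExponents_three {c : ℕ} (hc : 2 ≤ c) :
    symbolicExponents (σ := σ) (c - 2) 1 ∪ (symbolicExponents (c - 1) 1 + symbolicExponents c 1) ∪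
        (symbolicExponents c 1 + symbolicExponents c 1 + symbolicExponents c 1) ⊆
      symbolicExponents c 3 := by
  refine Set.union_subset (Set.union_subset (symbolicExponents_one_subset (by omega)) ?_) ?_
  · exact (Set.add_subset_add_right (symbolicExponents_one_subset (by omega))).trans
      (symbolicExponents_add_subset c 2 1)
  · exact (Set.add_subset_add_right (symbolicExponents_add_subset c 1 1)).trans
      (symbolicExponents_add_subset c 2 1)

theorem le_sum_of_mem_symbolicExponents {c m : ℕ} {d : σ →₀ ℕ} (hd : d ∈ symbolicExponents c m)
    {T : Finset σ} (hT : T ⊆ d.support) (hcard : d.supportᶜ.card + T.card = c) :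
    m ≤ ∑ i ∈ T, d i := by
  have hdisj : Disjoint d.supportᶜ T := Finset.disjoint_of_subset_right hT disjoint_compl_left
  have hzero : ∑ i ∈ d.supportᶜ, d i = 0 := Finset.sum_eq_zero fun i hi => by simpa using hi
  simpa [Finset.sum_union hdisj, hzero] using
    hd _ ((Finset.card_union_of_disjoint hdisj).trans hcard)

theorem indicator_one_mem_symbolicExponents_one {t : ℕ} {T : Finset σ} (h : Tᶜ.card < t) :
    Finsupp.indicator T (fun _ _ => 1) ∈ symbolicExponents t 1 := by
  rw [mem_symbolicExponents_one_iff]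
  convert h
  ext i
  simp

theorem exists_le_of_card_compl_support_add_one_eq {c : ℕ} {d : σ →₀ ℕ}
    (hd : d ∈ symbolicExponents c 3) (hz : d.supportᶜ.card + 1 = c) :
    ∃ a ∈ symbolicExponents c 1 + symbolicExponents c 1 + symbolicExponents c 1, a ≤ d := by
  have he := indicator_one_mem_symbolicExponents_one (T := d.support) (t := c) (by omega)
  refine ⟨_, Set.add_mem_add (Set.add_mem_add he he) he, fun i => ?_⟩
  by_cases hi : i ∈ d.support
  · simpa [hi] using
      le_sum_of_mem_symbolicExponents hd (Finset.singleton_subset_iff.2 hi) (by simpa)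
  · simp [hi]

theorem exists_le_of_card_compl_support_add_two_eq {c : ℕ} {d : σ →₀ ℕ}
    (hd : d ∈ symbolicExponents c 3) (hz : d.supportᶜ.card + 2 = c) (hc : c ≤ Fintype.card σ) :
    ∃ a ∈ symbolicExponents (c - 1) 1 + symbolicExponents c 1, a ≤ d := by
  have hU := d.support.card_compl_add_card
  obtain ⟨j, hj, hjmin⟩ := d.support.exists_min_image d (Finset.card_pos.1 (by omega))
  have htwo : ∀ i ∈ d.support, i ≠ j → 2 ≤ d i := fun i hi hij => by
    have := le_sum_of_mem_symbolicExponents hd (T := {i, j})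
      (Finset.insert_subset hi (Finset.singleton_subset_iff.2 hj))
      (by rw [Finset.card_pair hij]; omega)
    rw [Finset.sum_pair hij] at this
    have := hjmin i hi
    omega
  have he₁ := indicator_one_mem_symbolicExponents_one (T := d.support) (t := c - 1) (by omega)
  have he₂ := indicator_one_mem_symbolicExponents_one (T := d.support.erase j) (t := c) (by
    rw [Finset.card_compl, Finset.card_erase_of_mem hj]; omega)
  refine ⟨_, Set.add_mem_add he₁ he₂, fun i => ?_⟩
  by_cases hi : i ∈ d.support
  · obtain rfl | hij := eq_or_ne i j
    · simpa [hi, Nat.one_le_iff_ne_zero] using Finsupp.mem_support_iff.1 hi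
    · simpa [hi, hij] using htwo i hi hij
  · simp [hi]

theorem exists_le_of_mem_symbolicExponents_three {c : ℕ} (hcσ : c ≤ Fintype.card σ)
    {d : σ →₀ ℕ} (hd : d ∈ symbolicExponents c 3) :
    ∃ a ∈ symbolicExponents (c - 2) 1 ∪ (symbolicExponents (c - 1) 1 + symbolicExponents c 1) ∪
        (symbolicExponents c 1 + symbolicExponents c 1 + symbolicExponents c 1), a ≤ d := by
  have hz : d.supportᶜ.card < c :=
    mem_symbolicExponents_one_iff.1 fun S hS => le_trans (by norm_num) (hd S hS)
  obtain hz | hz | hz : d.supportᶜ.card + 2 < c ∨ d.supportᶜ.card + 2 = c ∨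
      d.supportᶜ.card + 1 = c := by omega
  · exact ⟨d, Or.inl (Or.inl (mem_symbolicExponents_one_iff.2 (by omega))), le_rfl⟩
  · obtain ⟨a, ha, had⟩ := exists_le_of_card_compl_support_add_two_eq hd hz hcσ
    exact ⟨a, Or.inl (Or.inr ha), had⟩
  · obtain ⟨a, ha, had⟩ := exists_le_of_card_compl_support_add_one_eq hd hz
    exact ⟨a, Or.inr ha, had⟩

end SymbolicExponents

end MvPolynomial

theorem monStarSymb_eq_monomialSpan (k : Type*) [Field k] (n c m : ℕ) :
    monStarSymb k n c m = monomialSpan (symbolicExponents c m) := by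
  ext p
  simp only [monStarSymb, varIdeal, Ideal.mem_iInf, span_X_image_pow_eq_monomialSpan,
    mem_monomialSpan_of_isUpperSet (isUpperSet_setOf_le_sum _ _),
    mem_monomialSpan_of_isUpperSet (isUpperSet_symbolicExponents c m)]
  exact ⟨fun h d hd S hS => h S hS hd, fun h S hS d hd => h hd S hS⟩

theorem monStar_eq_monomialSpan (k : Type*) [Field k] (n c : ℕ) :
    monStar k n c = monomialSpan (symbolicExponents c 1) := by
  simp only [← monStarSymb_eq_monomialSpan, monStar, monStarSymb, pow_one]

theorem symbolic_cube_decomposition_general (k : Type*) [Field k] (n c : ℕ)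
    (hc : 3 ≤ c) (hcn : c ≤ n) :
    monStarSymb k n c 3 =
      monStar k n (c - 2) + monStar k n (c - 1) * monStar k n c + monStar k n c ^ 3 := by
  rw [monStarSymb_eq_monomialSpan, monStar_eq_monomialSpan, monStar_eq_monomialSpan,
    monStar_eq_monomialSpan, pow_three', ← monomialSpan_add, ← monomialSpan_add,
    ← monomialSpan_add, ← monomialSpan_union, ← monomialSpan_union]
  refine le_antisymm (monomialSpan_le_of_forall_exists_le fun d hd => ?_)
    (monomialSpan_mono (union_subset_symbolicExponents_three (by omega)))
  exact exists_le_of_mem_symbolicExponents_three (by rw [Fintype.card_fin]; omega) hd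

theorem symbolic_cube_decomposition (k : Type*) [Field k] (n c : ℕ)
    (hn : 1 ≤ n) (hc : 3 ≤ c) (hcn : c ≤ n) :
    monStarSymb k n c 3 =
      monStar k n (c - 2) + monStar k n (c - 1) * monStar k n c + monStar k n c ^ 3 :=
  symbolic_cube_decomposition_general k n c hc hcn
end

section
/- Let F := F_1·F_2⋯F_s. Then the colon ideal satisfies (I_{2,F}^2 : F) = ⟨F_{i_1}⋯F_{i_{s−2}} : 1 ≤ i_1 < ⋯ < i_{s−2} ≤ s⟩, the ideal generated by all products of s−2 of the forms F_1,…,F_s. -/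
open MvPolynomial

/-- The star configuration ideal `I_{e,F} = ⋂_{|S| = e} ⟨F_i : i ∈ S⟩`. -/
noncomputable def starIdeal {k : Type*} [Field k] {n s : ℕ}
    (F : Fin s → MvPolynomial (Fin (n + 1)) k) (e : ℕ) :
    Ideal (MvPolynomial (Fin (n + 1)) k) :=
  ⨅ (S : Finset (Fin s)) (_ : S.card = e), Ideal.span (F '' ↑S)

/-- The `m`-th symbolic power `I_{e,F}^{(m)} = ⋂_{|S| = e} ⟨F_i : i ∈ S⟩^m`. -/
noncomputable def starSymb {k : Type*} [Field k] {n s : ℕ}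
    (F : Fin s → MvPolynomial (Fin (n + 1)) k) (e m : ℕ) :
    Ideal (MvPolynomial (Fin (n + 1)) k) :=
  ⨅ (S : Finset (Fin s)) (_ : S.card = e), (Ideal.span (F '' ↑S)) ^ m

/-!
Write `F = ∏ Fᵢ` and `vᵢ = ∏_{j ≠ i} Fⱼ`. Because each `Fₗ` is a nonzerodivisor modulo `⟨Fᵢ, Fⱼ⟩`,
an induction on the number of forms shows that `I_{2,F}` is generated by the `vᵢ`. So if
`g F ∈ I_{2,F}²`, then `g F = ∑ cᵢⱼ vᵢ vⱼ`. For `i ≠ j` we have `vᵢ vⱼ = F ∏_{l ≠ i, j} Fₗ`; on the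
diagonal, reducing modulo `Fᵢ` and using that `vᵢ` is a nonzerodivisor modulo `Fᵢ` gives `Fᵢ ∣ cᵢᵢ`,
so that `cᵢᵢ vᵢ² = F (cᵢᵢ / Fᵢ) vᵢ`. Cancelling the nonzerodivisor `F` leaves `g` in the ideal of
products of `s - 2` forms. Conversely `(F / Fₐ F_b) F = v_b vₐ ∈ I_{2,F}²`.
-/

open Finset

namespace RingTheory.Sequence.IsWeaklyRegular

variable {R : Type*} [CommRing R]

lemma isSMulRegular_quotient_take {rs : List R} (h : IsWeaklyRegular R rs) {i : ℕ}
    (hi : i < rs.length) : IsSMulRegular (R ⧸ Ideal.ofList (rs.take i)) rs[i] := by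
  have := h.regular_mod_prev i hi
  rwa [Ideal.smul_eq_mul, Ideal.mul_top] at this

lemma isSMulRegular_of_singleton {a : R} (h : IsWeaklyRegular R [a]) : IsSMulRegular R a :=
  ((isWeaklyRegular_cons_iff R a []).mp h).1

lemma isSMulRegular_quotient_of_pair {a b : R} (h : IsWeaklyRegular R [a, b]) :
    IsSMulRegular (R ⧸ Ideal.span {a}) b := by
  have := h.isSMulRegular_quotient_take (i := 1) (by simp)
  rwa [show [a, b].take 1 = [a] from rfl, Ideal.ofList_singleton] at this

lemma isSMulRegular_quotient_of_triple {a b c : R} (h : IsWeaklyRegular R [a, b, c]) :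
    IsSMulRegular (R ⧸ Ideal.span {a, b}) c := by
  have := h.isSMulRegular_quotient_take (i := 2) (by simp)
  rwa [show [a, b, c].take 2 = [a, b] from rfl, Ideal.ofList_cons, Ideal.ofList_singleton,
    ← Ideal.span_insert] at this

end RingTheory.Sequence.IsWeaklyRegular

section

variable {R : Type*} [CommRing R]

lemma isSMulRegular_prod {ι M : Type*} [AddCommGroup M] [Module R M] {s : Finset ι} {f : ι → R}
    (h : ∀ i ∈ s, IsSMulRegular M (f i)) : IsSMulRegular M (∏ i ∈ s, f i) :=
  prod_induction f _ (fun _ _ => IsSMulRegular.mul) (IsSMulRegular.one M) h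

lemma Ideal.mem_of_sum_mem {ι : Type*} [DecidableEq ι] {I : Ideal R} {s : Finset ι} {f : ι → R}
    {i : ι} (hi : i ∈ s) (hsum : ∑ k ∈ s, f k ∈ I) (hf : ∀ k ∈ s, k ≠ i → f k ∈ I) : f i ∈ I := by
  rw [← sum_erase_add s f hi] at hsum
  refine (I.add_mem_iff_right (I.sum_mem fun k hk => ?_)).mp hsum
  exact hf k (mem_of_mem_erase hk) (ne_of_mem_erase hk)

end

lemma Finset.prod_erase_mul_prod_erase {ι M : Type*} [CommMonoid M] [DecidableEq ι] {s : Finset ι}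
    (f : ι → M) {i j : ι} (hi : i ∈ s) (hij : i ≠ j) :
    (∏ k ∈ s.erase i, f k) * ∏ k ∈ s.erase j, f k =
      (∏ k ∈ s, f k) * ∏ k ∈ (s.erase i).erase j, f k := by
  have hi' : f i * ∏ k ∈ (s.erase i).erase j, f k = ∏ k ∈ s.erase j, f k := by
    rw [erase_right_comm]; exact mul_prod_erase _ f (mem_erase.mpr ⟨hij, hi⟩)
  calc (∏ k ∈ s.erase i, f k) * ∏ k ∈ s.erase j, f k
      = (f i * ∏ k ∈ s.erase i, f k) * ∏ k ∈ (s.erase i).erase j, f k := by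
        rw [← hi', mul_left_comm, mul_assoc]
    _ = _ := by rw [mul_prod_erase s f hi]

section StarConfiguration

variable {R ι : Type*} [CommRing R] (F : ι → R)

def iInfSpanPair : Ideal R := ⨅ (i) (j) (_ : i ≠ j), Ideal.span {F i, F j}

def spanProdsOfCard (m : ℕ) : Ideal R :=
  Ideal.span {p | ∃ S : Finset ι, S.card = m ∧ p = ∏ i ∈ S, F i}

variable {F}

lemma mem_iInfSpanPair {g : R} :
    g ∈ iInfSpanPair F ↔ ∀ i j, i ≠ j → g ∈ Ideal.span {F i, F j} := by
  simp only [iInfSpanPair, Ideal.mem_iInf]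

lemma prod_mem_spanProdsOfCard {S : Finset ι} {m : ℕ} (hS : S.card = m) :
    ∏ i ∈ S, F i ∈ spanProdsOfCard F m :=
  Ideal.subset_span ⟨S, hS, rfl⟩

lemma prod_mem_iInfSpanPair {U : Finset ι} (hU : ∀ i j, i ≠ j → i ∈ U ∨ j ∈ U) :
    ∏ i ∈ U, F i ∈ iInfSpanPair F := by
  refine mem_iInfSpanPair.mpr fun i j hij => ?_
  rcases hU i j hij with hi | hj
  · exact Ideal.mem_of_dvd _ (dvd_prod_of_mem F hi) (Ideal.subset_span (by simp))
  · exact Ideal.mem_of_dvd _ (dvd_prod_of_mem F hj) (Ideal.subset_span (by simp))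

variable [DecidableEq ι]

theorem mem_span_prod_erase_of_forall_mem_span_pair
    (hF : ∀ i j l, i ≠ j → i ≠ l → j ≠ l → IsSMulRegular (R ⧸ Ideal.span {F i, F j}) (F l))
    {T : Finset ι} (hT : T.Nonempty) {g : R}
    (hg : ∀ i ∈ T, ∀ j ∈ T, i ≠ j → g ∈ Ideal.span {F i, F j}) :
    g ∈ Ideal.span ((fun i => ∏ j ∈ T.erase i, F j) '' T) := by
  induction hT using Finset.Nonempty.cons_induction with
  | singleton a => simp
  | cons t T ht _ ih =>
    obtain ⟨c, rfl⟩ := (Submodule.mem_span_image_finset_iff_exists_fun' R).mp <|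
      ih fun i hi j hj => hg i (mem_cons_of_mem hi) j (mem_cons_of_mem hj)
    refine Ideal.sum_mem _ fun i hi => ?_
    have hit : i ≠ t := fun h => ht (h ▸ hi)
    -- every other summand is a multiple of `F i`, so `c i ∈ ⟨F i, F t⟩` by regularity
    have hterm : c i • ∏ j ∈ T.erase i, F j ∈ Ideal.span {F i, F t} := by
      refine Ideal.mem_of_sum_mem (f := fun k => c k • ∏ j ∈ T.erase k, F j) hi
        (hg i (mem_cons_of_mem hi) t (mem_cons_self t T) hit) fun k _ hki => ?_
      exact Ideal.mul_mem_left _ _ (Ideal.mem_of_dvd _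
        (dvd_prod_of_mem F (mem_erase.mpr ⟨hki.symm, hi⟩)) (Ideal.subset_span (by simp)))
    have hreg : IsSMulRegular (R ⧸ Ideal.span {F i, F t}) (∏ j ∈ T.erase i, F j) :=
      isSMulRegular_prod fun l hl =>
        hF i t l hit (ne_of_mem_erase hl).symm fun h => ht (h ▸ mem_of_mem_erase hl)
    obtain ⟨a, b, hab⟩ := Ideal.mem_span_pair.mp <|
      mem_of_isSMulRegular_quotient_of_smul_mem hreg (x := c i)
        (by rw [smul_eq_mul, mul_comm]; exact hterm)
    have hFi : F i * ∏ j ∈ T.erase i, F j = ∏ j ∈ (cons t T ht).erase t, F j := by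
      rw [erase_cons, mul_prod_erase _ F hi]
    have hFt : F t * ∏ j ∈ T.erase i, F j = ∏ j ∈ (cons t T ht).erase i, F j := by
      rw [erase_cons_of_ne ht hit.symm, prod_cons]
    rw [smul_eq_mul, ← hab, add_mul, mul_assoc, mul_assoc, hFi, hFt]
    exact Ideal.add_mem _ (Ideal.mul_mem_left _ _ (Ideal.subset_span ⟨t, by simp, rfl⟩))
      (Ideal.mul_mem_left _ _ (Ideal.subset_span ⟨i, by simp [hi], rfl⟩))

variable [Fintype ι]

theorem iInfSpanPair_eq_span_prod_erase [Nonempty ι]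
    (hF : ∀ i j l, i ≠ j → i ≠ l → j ≠ l → IsSMulRegular (R ⧸ Ideal.span {F i, F j}) (F l)) :
    iInfSpanPair F = Ideal.span (Set.range fun i => ∏ j ∈ univ.erase i, F j) := by
  refine le_antisymm (fun g hg => ?_) (Ideal.span_le.mpr ?_)
  · simpa using mem_span_prod_erase_of_forall_mem_span_pair hF univ_nonempty
      fun i _ j _ hij => mem_iInfSpanPair.mp hg i j hij
  · rintro _ ⟨i, rfl⟩
    refine prod_mem_iInfSpanPair fun a b hab => ?_
    simp only [mem_erase, mem_univ, and_true]
    grind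

lemma card_erase_erase_univ {i j : ι} (hij : i ≠ j) :
    ((univ.erase i).erase j).card = Fintype.card ι - 2 := by
  rw [card_erase_of_mem (mem_erase.mpr ⟨hij.symm, mem_univ j⟩), card_erase_of_mem (mem_univ i),
    card_univ]
  omega

lemma span_prod_erase_le_spanProdsOfCard (hcard : 2 ≤ Fintype.card ι) :
    Ideal.span (Set.range fun i => ∏ j ∈ univ.erase i, F j) ≤
      spanProdsOfCard F (Fintype.card ι - 2) := by
  refine Ideal.span_le.mpr ?_
  rintro _ ⟨i, rfl⟩
  obtain ⟨j, hji⟩ := Fintype.exists_ne_of_one_lt_card hcard i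
  dsimp only
  rw [← mul_prod_erase _ F (mem_erase.mpr ⟨hji, mem_univ j⟩)]
  exact Ideal.mul_mem_left _ _ (prod_mem_spanProdsOfCard (card_erase_erase_univ hji.symm))

lemma sq_span_prod_erase_le :
    Ideal.span (Set.range fun i => ∏ j ∈ univ.erase i, F j) ^ 2 ≤
      Ideal.span {∏ i, F i} * spanProdsOfCard F (Fintype.card ι - 2) ⊔
        Ideal.span (Set.range fun i => (∏ j ∈ univ.erase i, F j) ^ 2) := by
  rw [sq, Ideal.span_mul_span', Ideal.span_le]
  rintro _ ⟨_, ⟨i, rfl⟩, _, ⟨j, rfl⟩, rfl⟩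
  dsimp only
  rcases eq_or_ne i j with rfl | hij
  · exact Ideal.mem_sup_right (Ideal.subset_span ⟨i, sq _⟩)
  · rw [prod_erase_mul_prod_erase F (mem_univ i) hij]
    exact Ideal.mem_sup_left (Ideal.mul_mem_mul (Ideal.mem_span_singleton_self _)
      (prod_mem_spanProdsOfCard (card_erase_erase_univ hij)))

lemma mem_span_mul_span_prod_erase_of_mem_span_sq
    (hF : ∀ i j, i ≠ j → IsSMulRegular (R ⧸ Ideal.span {F i}) (F j)) {y : R}
    (hyF : y ∈ Ideal.span {∏ i, F i})
    (hy : y ∈ Ideal.span (Set.range fun i => (∏ j ∈ univ.erase i, F j) ^ 2)) :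
    y ∈ Ideal.span {∏ i, F i} * Ideal.span (Set.range fun i => ∏ j ∈ univ.erase i, F j) := by
  obtain ⟨d, rfl⟩ := Ideal.mem_span_range_iff_exists_fun.mp hy
  refine Ideal.sum_mem _ fun i _ => ?_
  have hdiv : d i * (∏ j ∈ univ.erase i, F j) ^ 2 ∈ Ideal.span {F i} := by
    refine Ideal.mem_of_sum_mem (f := fun k => d k * (∏ j ∈ univ.erase k, F j) ^ 2) (mem_univ i)
      (Ideal.span_singleton_le_span_singleton.mpr (dvd_prod_of_mem F (mem_univ i)) hyF)
      fun k _ hki => Ideal.mul_mem_left _ _ (Ideal.mem_span_singleton.mpr ?_)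
    exact (dvd_prod_of_mem F (mem_erase.mpr ⟨hki.symm, mem_univ i⟩)).pow two_ne_zero
  have hreg : IsSMulRegular (R ⧸ Ideal.span {F i}) ((∏ j ∈ univ.erase i, F j) ^ 2) :=
    (isSMulRegular_prod fun j hj => hF i j (ne_of_mem_erase hj).symm).pow 2
  obtain ⟨e, he⟩ := Ideal.mem_span_singleton.mp <|
    mem_of_isSMulRegular_quotient_of_smul_mem hreg (x := d i)
      (by rw [smul_eq_mul, mul_comm]; exact hdiv)
  rw [he, show F i * e * (∏ j ∈ univ.erase i, F j) ^ 2 =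
      (F i * ∏ j ∈ univ.erase i, F j) * (e * ∏ j ∈ univ.erase i, F j) by ring,
    mul_prod_erase _ F (mem_univ i)]
  exact Ideal.mul_mem_mul (Ideal.mem_span_singleton_self _)
    (Ideal.mul_mem_left _ _ (Ideal.subset_span ⟨i, rfl⟩))

lemma mem_spanProdsOfCard_of_mul_prod_mem_sq (hcard : 2 ≤ Fintype.card ι)
    (hF₁ : ∀ i, IsSMulRegular R (F i))
    (hF₂ : ∀ i j, i ≠ j → IsSMulRegular (R ⧸ Ideal.span {F i}) (F j))
    (hF₃ : ∀ i j l, i ≠ j → i ≠ l → j ≠ l → IsSMulRegular (R ⧸ Ideal.span {F i, F j}) (F l))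
    {g : R} (hg : g * ∏ i, F i ∈ iInfSpanPair F ^ 2) :
    g ∈ spanProdsOfCard F (Fintype.card ι - 2) := by
  have : Nonempty ι := Fintype.card_pos_iff.mp (by omega)
  rw [iInfSpanPair_eq_span_prod_erase hF₃] at hg
  obtain ⟨x, hx, y, hy, hxy⟩ := Submodule.mem_sup.mp (sq_span_prod_erase_le hg)
  have hyF : y ∈ Ideal.span {∏ i, F i} := by
    rw [← add_sub_cancel_left x y, hxy]
    exact Ideal.sub_mem _ (Ideal.mem_span_singleton.mpr (dvd_mul_left _ _)) (Ideal.mul_le_left hx)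
  have hgF : g * ∏ i, F i ∈ Ideal.span {∏ i, F i} * spanProdsOfCard F (Fintype.card ι - 2) := by
    rw [← hxy]
    exact Ideal.add_mem _ hx (Ideal.mul_mono_right (span_prod_erase_le_spanProdsOfCard hcard)
      (mem_span_mul_span_prod_erase_of_mem_span_sq hF₂ hyF hy))
  obtain ⟨z, hz, hzg⟩ := Ideal.mem_span_singleton_mul.mp hgF
  have hP : IsSMulRegular R (∏ i, F i) := isSMulRegular_prod fun i _ => hF₁ i
  have hzg' : z = g := hP <| by simpa only [smul_eq_mul, mul_comm g] using hzg
  rwa [← hzg']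

lemma prod_mul_prod_mem_sq {S : Finset ι} (hS : Sᶜ.card = 2) :
    (∏ i ∈ S, F i) * ∏ i, F i ∈ iInfSpanPair F ^ 2 := by
  obtain ⟨a, b, hab, hSc⟩ := card_eq_two.mp hS
  have hcompl : ∀ x, x ∉ S ↔ x = a ∨ x = b := fun x => by
    rw [← mem_compl, hSc, mem_insert, mem_singleton]
  have hmem : ∀ c ∉ S, ∏ i ∈ insert c S, F i ∈ iInfSpanPair F := fun c hc =>
    prod_mem_iInfSpanPair fun i j hij => by grind
  have hprod : (∏ i ∈ S, F i) * ∏ i, F i = (∏ i ∈ insert a S, F i) * ∏ i ∈ insert b S, F i := by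
    rw [← prod_mul_prod_compl S F, hSc, prod_pair hab, prod_insert ((hcompl a).mpr (.inl rfl)),
      prod_insert ((hcompl b).mpr (.inr rfl))]
    ring
  rw [hprod, sq]
  exact Ideal.mul_mem_mul (hmem a ((hcompl a).mpr (.inl rfl))) (hmem b ((hcompl b).mpr (.inr rfl)))

theorem colon_sq_iInfSpanPair (hcard : 2 ≤ Fintype.card ι)
    (hF₁ : ∀ i, IsSMulRegular R (F i))
    (hF₂ : ∀ i j, i ≠ j → IsSMulRegular (R ⧸ Ideal.span {F i}) (F j))
    (hF₃ : ∀ i j l, i ≠ j → i ≠ l → j ≠ l → IsSMulRegular (R ⧸ Ideal.span {F i, F j}) (F l)) :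
    (iInfSpanPair F ^ 2).colon (Ideal.span {∏ i, F i}) =
      spanProdsOfCard F (Fintype.card ι - 2) := by
  refine le_antisymm (fun g hg => ?_) (Ideal.span_le.mpr ?_)
  · exact mem_spanProdsOfCard_of_mul_prod_mem_sq hcard hF₁ hF₂ hF₃
      (Ideal.mem_colon_span_singleton.mp hg)
  · rintro _ ⟨S, hS, rfl⟩
    refine Ideal.mem_colon_span_singleton.mpr (prod_mul_prod_mem_sq ?_)
    rw [card_compl, hS]
    omega

end StarConfiguration

lemma starIdeal_two_eq_iInfSpanPair {k : Type*} [Field k] {n s : ℕ}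
    (F : Fin s → MvPolynomial (Fin (n + 1)) k) : starIdeal F 2 = iInfSpanPair F := by
  ext g
  simp only [starIdeal, Ideal.mem_iInf, mem_iInfSpanPair]
  constructor
  · intro h i j hij
    simpa [Set.image_pair] using h {i, j} (card_pair hij)
  · rintro h S hS
    obtain ⟨a, b, hab, rfl⟩ := card_eq_two.mp hS
    simpa [Set.image_pair] using h a b hab

theorem star_colon_ideal_general (k : Type*) [Field k] (n s : ℕ) (hs : 3 ≤ s)
    (F : Fin s → MvPolynomial (Fin (n + 1)) k)
    (hreg : ∀ L : List (Fin s), L.Nodup → L.length ≤ 3 →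
      RingTheory.Sequence.IsRegular (MvPolynomial (Fin (n + 1)) k) (L.map F)) :
    Submodule.colon (starIdeal F 2 ^ 2) (Ideal.span {∏ i, F i}) =
      Ideal.span {p : MvPolynomial (Fin (n + 1)) k |
        ∃ S : Finset (Fin s), S.card = s - 2 ∧ p = ∏ i ∈ S, F i} := by
  have h := colon_sq_iInfSpanPair (F := F) (by rw [Fintype.card_fin]; omega)
    (fun i => (hreg [i] (by simp) (by simp)).isSMulRegular_of_singleton)
    (fun i j hij => (hreg [i, j] (by simp [hij]) (by simp)).isSMulRegular_quotient_of_pair)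
    (fun i j l hij hil hjl =>
      (hreg [i, j, l] (by simp [hij, hil, hjl]) (by simp)).isSMulRegular_quotient_of_triple)
  rwa [Fintype.card_fin, ← starIdeal_two_eq_iInfSpanPair] at h

theorem star_colon_ideal (k : Type*) [Field k] (n s : ℕ) (hs : 3 ≤ s)
    (F : Fin s → MvPolynomial (Fin (n + 1)) k)
    (hF : ∀ i, ∃ d, 0 < d ∧ (F i).IsHomogeneous d)
    (hreg : ∀ L : List (Fin s), L.Nodup → L.length ≤ 3 →
      RingTheory.Sequence.IsRegular (MvPolynomial (Fin (n + 1)) k) (L.map F)) :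
    Submodule.colon (starIdeal F 2 ^ 2) (Ideal.span {∏ i, F i}) =
      Ideal.span {p : MvPolynomial (Fin (n + 1)) k |
        ∃ S : Finset (Fin s), S.card = s - 2 ∧ p = ∏ i ∈ S, F i} :=
  star_colon_ideal_general k n s hs F hreg
end

section
/- Let P be a prime ideal of R of height 2 with I_{2,F} ⊆ P. Then there exists a unique pair of indices 1 ≤ i < j ≤ s such that F_i ∈ P and F_j ∈ P (equivalently, ⟨F_i,F_j⟩ ⊆ P). -/
open MvPolynomial

/-! A prime containing `I_{2,F}` contains one of the finitely many ideals `⟨F_i, F_j⟩` whose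
intersection it is. If it contained three of the `F_i`, they would form a regular sequence inside
it, which is impossible in height `2`: a weakly regular sequence `x_1, …, x_r` in a prime `p`
forces `r ≤ height p`, because a minimal prime `q` of `(x_1, …, x_{r-1})` inside `p` cannot contain
the nonzerodivisor `x_r` modulo `(x_1, …, x_{r-1})`, so `q < p`. -/

namespace RingTheory.Sequence

open Ideal

theorem IsWeaklyRegular.length_le_height {R : Type*} [CommRing R] {rs : List R}
    (hrs : IsWeaklyRegular R rs) {p : Ideal R} [p.IsPrime] (hp : ofList rs ≤ p) :
    rs.length ≤ p.height := by
  induction rs using List.reverseRecOn generalizing p with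
  | nil => simp
  | append_singleton rs x ih =>
    obtain ⟨hrs, hx⟩ := (isWeaklyRegular_append_iff R rs [x]).mp hrs
    rw [isWeaklyRegular_singleton_iff, smul_eq_mul, mul_top] at hx
    rw [ofList_append, sup_le_iff] at hp
    obtain ⟨q, hq, hqp⟩ := exists_minimalPrimes_le hp.1
    have := hq.isPrime
    have hxq : x ∉ q := hx.notMem_of_mem_minimalPrimes (by rwa [annihilator_quotient])
    have hxp : x ∈ p := hp.2 (subset_span (by simp))
    calc ((rs ++ [x]).length : ℕ∞) = rs.length + 1 := by simp
      _ ≤ q.height + 1 := by gcongr; exact ih hrs hq.le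
      _ ≤ p.height := height_add_one_le_of_lt_of_isPrime (hqp.lt_of_ne fun h => hxq (h ▸ hxp))

end RingTheory.Sequence

theorem exists_ne_mem_of_starIdeal_two_le {k : Type*} [Field k] {n s : ℕ}
    {F : Fin s → MvPolynomial (Fin (n + 1)) k} {P : Ideal (MvPolynomial (Fin (n + 1)) k)}
    (hP : P.IsPrime) (hIP : starIdeal F 2 ≤ P) :
    ∃ i j, i ≠ j ∧ F i ∈ P ∧ F j ∈ P := by
  classical
  have hinf : ({S : Finset (Fin s) | S.card = 2} : Finset _).inf
      (fun S => Ideal.span (F '' ↑S)) ≤ P :=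
    le_trans (le_iInf₂ fun S hS => Finset.inf_le (by simpa using hS)) hIP
  obtain ⟨S, hS, hSP⟩ := hP.inf_le'.mp hinf
  obtain ⟨i, j, hij, rfl⟩ := Finset.card_eq_two.mp (Finset.mem_filter.mp hS).2
  exact ⟨i, j, hij, hSP (Ideal.subset_span ⟨i, by simp, rfl⟩),
    hSP (Ideal.subset_span ⟨j, by simp, rfl⟩)⟩

theorem existsUnique_lt_pair_of_not_three {α : Type*} [LinearOrder α] {Q : α → Prop}
    (hpair : ∃ i j, i ≠ j ∧ Q i ∧ Q j)
    (hthree : ∀ a b c, a ≠ b → a ≠ c → b ≠ c → Q a → Q b → Q c → False) :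
    ∃! ij : α × α, ij.1 < ij.2 ∧ Q ij.1 ∧ Q ij.2 := by
  obtain ⟨i, j, hij, hi, hj⟩ := hpair
  wlog hlt : i < j generalizing i j
  · exact this j i hij.symm hj hi (hij.symm.lt_of_le (not_lt.mp hlt))
  refine ⟨(i, j), ⟨hlt, hi, hj⟩, ?_⟩
  rintro ⟨a, b⟩ ⟨hab, ha, hb⟩
  by_contra hne
  obtain ⟨x, hx, hxi, hxj⟩ : ∃ x, Q x ∧ x ≠ i ∧ x ≠ j := by
    by_contra! hij'
    apply hne
    rcases eq_or_ne a i with rfl | hai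
    · rcases eq_or_ne b a with rfl | hba
      · order
      · simp [hij' b hb hba]
    · have := hij' a ha hai
      have := hij' b hb (by order)
      order
  exact hthree x i j hxi hxj hij hx hi hj

theorem star_height_two_prime_unique_pair_general (k : Type*) [Field k] (n s : ℕ)
    (F : Fin s → MvPolynomial (Fin (n + 1)) k)
    (hreg : ∀ L : List (Fin s), L.Nodup → L.length ≤ 3 →
      RingTheory.Sequence.IsRegular (MvPolynomial (Fin (n + 1)) k) (L.map F))
    (P : Ideal (MvPolynomial (Fin (n + 1)) k)) (hP : P.IsPrime)
    (hht : Order.height (⟨P, hP⟩ : PrimeSpectrum (MvPolynomial (Fin (n + 1)) k)) = 2)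
    (hIP : starIdeal F 2 ≤ P) :
    ∃! ij : Fin s × Fin s, ij.1 < ij.2 ∧ F ij.1 ∈ P ∧ F ij.2 ∈ P := by
  refine existsUnique_lt_pair_of_not_three (exists_ne_mem_of_starIdeal_two_le hP hIP) ?_
  intro a b c hab hac hbc ha hb hc
  have hreg3 := (hreg [a, b, c] (by simp [hab, hac, hbc]) (by simp)).toIsWeaklyRegular
  have h3 : 3 ≤ P.height := by
    simpa using hreg3.length_le_height (Ideal.span_le.mpr (by simp [Set.subset_def, ha, hb, hc]))
  rw [PrimeSpectrum.height_eq_orderHeight ⟨P, hP⟩, hht] at h3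
  exact absurd h3 (by norm_num)

theorem star_height_two_prime_unique_pair (k : Type*) [Field k] (n s : ℕ) (hs : 2 ≤ s)
    (F : Fin s → MvPolynomial (Fin (n + 1)) k)
    (hF : ∀ i, ∃ d, 0 < d ∧ (F i).IsHomogeneous d)
    (hreg : ∀ L : List (Fin s), L.Nodup → L.length ≤ 3 →
      RingTheory.Sequence.IsRegular (MvPolynomial (Fin (n + 1)) k) (L.map F))
    (P : Ideal (MvPolynomial (Fin (n + 1)) k)) (hP : P.IsPrime)
    (hht : Order.height (⟨P, hP⟩ : PrimeSpectrum (MvPolynomial (Fin (n + 1)) k)) = 2)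
    (hIP : starIdeal F 2 ≤ P) :
    ∃! ij : Fin s × Fin s, ij.1 < ij.2 ∧ F ij.1 ∈ P ∧ F ij.2 ∈ P :=
  star_height_two_prime_unique_pair_general k n s F hreg P hP hht hIP
end
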